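/- arXiv:2003.06689 — 8 statements merged into one kernel-verified Lean document; each statement's English description precedes it below -/
import Mathlib

section
/- Suppose there exist integers t_1, …, t_n with d_1^{t_1}···d_n^{t_n} ≡ −1 (mod c) (exponents interpreted in the unit group of ℤ/cℤ). Let U = {(t_1, …, t_n) ∈ ℤ^n : d_1^{t_1}···d_n^{t_n} ≡ 1 (mod c)} and let M = {δ ∈ (ℤ/cℤ)^* : δ² = 1 and δ ≡ d_1^{s_1}···d_n^{s_n} (mod c) for some integers s_1, …, s_n}. Then the index p = #(U/(U ∩ 2ℤ^n)) and the cardinality #M satisfy p · #M = 2^n; equivalently, with q = (1/2)·#M, one has p·q = 2^{n−1}. -/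
/-!
Write `φ : ℤⁿ → G`, `t ↦ ∏ gᵢ ^ tᵢ`, for the map into the finite abelian group `G`, with image
`A`, and `ρ : ℤⁿ → (ℤ/2)ⁿ` for reduction mod 2. Since `ker ρ = 2ℤⁿ`, the preimage of `ρ(ker φ)`
is `ker φ + 2ℤⁿ = φ⁻¹(A²)`, so `ρ(ker φ)` has index `[A : A²]` in `(ℤ/2)ⁿ`. Squaring on `A` has
image `A²` and kernel `A[2]`, hence `[A : A²] = #A[2]`, and `#ρ(ker φ) · #A[2] = 2ⁿ`.
-/

open Function

section ReduceModTwo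

variable (ι : Type*)

abbrev reduceModTwo : (ι → ℤ) →+ (ι → ZMod 2) :=
  (Int.castAddHom (ZMod 2)).compLeft ι

theorem reduceModTwo_surjective : Surjective (reduceModTwo ι) :=
  ZMod.intCast_surjective.comp_left

theorem ker_reduceModTwo : (reduceModTwo ι).ker = (nsmulAddMonoidHom 2).range := by
  ext t
  constructor
  · intro ht
    refine ⟨fun i => t i / 2, funext fun i => ?_⟩
    have : ((t i : ℤ) : ZMod 2) = 0 := congrFun ht i
    rw [ZMod.intCast_zmod_eq_zero_iff_dvd] at this
    simp only [nsmulAddMonoidHom_apply, Pi.smul_apply, nsmul_eq_mul]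
    omega
  · rintro ⟨s, rfl⟩
    ext i
    simp [show (2 : ZMod 2) = 0 from rfl]

end ReduceModTwo

section TwoTorsion

variable {ι A : Type*} [AddCommGroup A]

theorem ker_reduceModTwo_le_comap_range_two_nsmul (φ : (ι → ℤ) →+ A) :
    (reduceModTwo ι).ker ≤ (nsmulAddMonoidHom 2 : A →+ A).range.comap φ := by
  rw [ker_reduceModTwo]
  rintro _ ⟨s, rfl⟩
  exact ⟨φ s, (map_nsmul φ 2 s).symm⟩

theorem map_reduceModTwo_comap_range_two_nsmul {φ : (ι → ℤ) →+ A} (hφ : Surjective φ) :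
    ((nsmulAddMonoidHom 2 : A →+ A).range.comap φ).map (reduceModTwo ι) =
      φ.ker.map (reduceModTwo ι) := by
  refine le_antisymm ?_ (AddSubgroup.map_mono fun t ht => ⟨0, by simpa using ht.symm⟩)
  rintro _ ⟨t, ⟨a, ha⟩, rfl⟩
  obtain ⟨s, rfl⟩ := hφ a
  refine ⟨t - 2 • s, ?_, ?_⟩
  · rw [SetLike.mem_coe, AddMonoidHom.mem_ker, map_sub, map_nsmul, ← ha,
      nsmulAddMonoidHom_apply, sub_self]
  · have : 2 • s ∈ (reduceModTwo ι).ker := by rw [ker_reduceModTwo]; exact ⟨s, rfl⟩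
    rw [map_sub, this, sub_zero]

theorem index_map_reduceModTwo_comap_range_two_nsmul [Finite A] {φ : (ι → ℤ) →+ A}
    (hφ : Surjective φ) :
    (((nsmulAddMonoidHom 2 : A →+ A).range.comap φ).map (reduceModTwo ι)).index =
      Nat.card (nsmulAddMonoidHom 2 : A →+ A).ker := by
  rw [← AddSubgroup.index_comap_of_surjective _ (reduceModTwo_surjective ι),
    AddSubgroup.comap_map_eq_self (ker_reduceModTwo_le_comap_range_two_nsmul φ),
    AddSubgroup.index_comap_of_surjective _ hφ, AddSubgroup.index_range]

theorem card_map_reduceModTwo_ker_mul_card_ker_two_nsmul [Finite ι] [Finite A]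
    {φ : (ι → ℤ) →+ A} (hφ : Surjective φ) :
    Nat.card (φ.ker.map (reduceModTwo ι)) * Nat.card (nsmulAddMonoidHom 2 : A →+ A).ker =
      2 ^ Nat.card ι := by
  rw [← index_map_reduceModTwo_comap_range_two_nsmul hφ,
    ← map_reduceModTwo_comap_range_two_nsmul hφ, AddSubgroup.card_mul_index,
    Nat.card_fun, Nat.card_zmod]

end TwoTorsion

section ZPowProd

variable {ι G : Type*} [Fintype ι] [CommGroup G]

def zpowProdHom (g : ι → G) : (ι → ℤ) →+ Additive G where
  toFun t := Additive.ofMul (∏ i, g i ^ t i)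
  map_zero' := by simp
  map_add' s t := by simp [zpow_add, Finset.prod_mul_distrib]

theorem ncard_image_reduceModTwo_mul_ncard_sq_eq_one [Finite G] (g : ι → G) :
    (reduceModTwo ι '' {t | ∏ i, g i ^ t i = 1}).ncard *
      {x : G | x ^ 2 = 1 ∧ ∃ s : ι → ℤ, ∏ i, g i ^ s i = x}.ncard = 2 ^ Nat.card ι := by
  set φ := zpowProdHom g
  have hU : reduceModTwo ι '' {t | ∏ i, g i ^ t i = 1} =
      φ.rangeRestrict.ker.map (reduceModTwo ι) := by
    rw [AddMonoidHom.ker_rangeRestrict, AddSubgroup.coe_map]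
    rfl
  have hM : {x : G | x ^ 2 = 1 ∧ ∃ s : ι → ℤ, ∏ i, g i ^ s i = x}.ncard =
      Nat.card (nsmulAddMonoidHom 2 : φ.range →+ φ.range).ker := by
    rw [← Nat.card_coe_set_eq]
    refine Nat.card_congr
      { toFun x := ⟨⟨Additive.ofMul x.1, x.2.2⟩, Subtype.ext (by simpa [← ofMul_pow] using x.2.1)⟩
        invFun a := ⟨a.1.1.toMul, ?_, ?_⟩
        left_inv _ := rfl
        right_inv _ := rfl }
    · simpa using congrArg (fun b : φ.range => b.1.toMul) a.2
    · obtain ⟨s, hs⟩ := a.1.2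
      exact ⟨s, congrArg Additive.toMul hs⟩
  rw [hU, hM, ← Nat.card_coe_set_eq]
  exact card_map_reduceModTwo_ker_mul_card_ker_two_nsmul φ.rangeRestrict_surjective

end ZPowProd

theorem p_mul_card_M_eq_two_pow_general (c : ℕ)
    (n : ℕ) (d : Fin n → ℕ)
    (hdc : ∀ i, Nat.Coprime (d i) c)
    (U : Set (Fin n → ℤ))
    (hU : U = {t : Fin n → ℤ |
      (∏ i, (ZMod.unitOfCoprime (d i) (hdc i)) ^ (t i) : (ZMod c)ˣ) = 1})
    (M : Set (ZMod c))
    (hM : M = {δ : ZMod c | δ ^ 2 = 1 ∧ ∃ s : Fin n → ℤ,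
      ((∏ i, (ZMod.unitOfCoprime (d i) (hdc i)) ^ (s i) : (ZMod c)ˣ) : ZMod c) = δ})
    (p : ℕ)
    (hp : p = ((fun t : Fin n → ℤ => fun i => ((t i : ZMod 2))) '' U).ncard) :
    p * M.ncard = 2 ^ n := by
  set u : Fin n → (ZMod c)ˣ := fun i => ZMod.unitOfCoprime (d i) (hdc i)
  have hM' : M = Units.val '' {x | x ^ 2 = 1 ∧ ∃ s : Fin n → ℤ, ∏ i, u i ^ s i = x} := by
    rw [hM]
    ext δ
    constructor
    · rintro ⟨hδ, s, rfl⟩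
      exact ⟨_, ⟨Units.ext (by simpa using hδ), s, rfl⟩, rfl⟩
    · rintro ⟨x, ⟨hx, s, rfl⟩, rfl⟩
      exact ⟨by rw [← Units.val_pow_eq_pow_val, hx, Units.val_one], s, rfl⟩
  rw [hp, hU, hM', Set.ncard_image_of_injective _ Units.val_injective]
  have h := ncard_image_reduceModTwo_mul_ncard_sq_eq_one u
  rwa [Nat.card_fin] at h

/-- **Section 3: `p·q = 2^{n-1}`.**  Let `c > 1` be odd and `d_1, …, d_n > 1` coprime to
`c`, and suppose some product `d_1^{t_1}···d_n^{t_n}` is congruent to `-1 mod c`.  Let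
`U = {t ∈ ℤ^n : d_1^{t_1}···d_n^{t_n} ≡ 1 (mod c)}`, let
`M = {δ ∈ (ℤ/cℤ)^* : δ² = 1 ∧ δ ≡ d_1^{s_1}···d_n^{s_n} (mod c) for some s ∈ ℤ^n}`, and
let `p = #(U/(U ∩ 2ℤ^n))`, computed as the cardinality of the image of `U` under reduction
modulo 2.  Then `p · #M = 2^n`. -/
theorem p_mul_card_M_eq_two_pow (c : ℕ) (hc : 1 < c) (hcodd : Odd c)
    (n : ℕ) (hn : 1 ≤ n) (d : Fin n → ℕ) (hd : ∀ i, 1 < d i)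
    (hdc : ∀ i, Nat.Coprime (d i) c)
    (hneg : ∃ t : Fin n → ℤ,
      ((∏ i, (ZMod.unitOfCoprime (d i) (hdc i)) ^ (t i) : (ZMod c)ˣ) : ZMod c) = -1)
    (U : Set (Fin n → ℤ))
    (hU : U = {t : Fin n → ℤ |
      (∏ i, (ZMod.unitOfCoprime (d i) (hdc i)) ^ (t i) : (ZMod c)ˣ) = 1})
    (M : Set (ZMod c))
    (hM : M = {δ : ZMod c | δ ^ 2 = 1 ∧ ∃ s : Fin n → ℤ,
      ((∏ i, (ZMod.unitOfCoprime (d i) (hdc i)) ^ (s i) : (ZMod c)ˣ) : ZMod c) = δ})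
    (p : ℕ)
    (hp : p = ((fun t : Fin n → ℤ => fun i => ((t i : ZMod 2))) '' U).ncard) :
    p * M.ncard = 2 ^ n :=
  p_mul_card_M_eq_two_pow_general c n d hdc U hU M hM p hp
end

section
/- Let g ≥ 2 be an integer, c = 2^g + 1, and d = 2^{g−1} + 1. If δ is an integer with δ² ≡ 1 (mod c) and δ ≡ d^{s_1}·2^{s_2} (mod c) for some nonnegative integers s_1, s_2, then δ ≡ 1 (mod c) or δ ≡ −1 (mod c). -/
/-!
Modulo `c = 2 ^ g + 1` the residue `d` is the inverse of `2`, so `δ ≡ 2 ^ t` for an integer `t`.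
As `2 ^ g ≡ -1 ≢ 1`, the order `n` of `2` divides `2g` but not `g`; then `n ∣ 2t` forces
`t ≡ 0` or `t ≡ g (mod n)`, that is `δ ≡ 1` or `δ ≡ -1`.
-/

theorem Int.dvd_or_dvd_sub_of_dvd_two_mul {n a b : ℤ} (ha : n ∣ 2 * a) (hb : n ∣ 2 * b)
    (hnb : ¬ n ∣ b) : n ∣ a ∨ n ∣ a - b := by
  obtain ⟨k, hk⟩ := ha
  obtain ⟨l, hl⟩ := hb
  rcases Int.even_or_odd k with ⟨j, rfl⟩ | ⟨j, rfl⟩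
  · exact .inl ⟨j, by linarith⟩
  · rcases Int.even_or_odd l with ⟨i, rfl⟩ | ⟨i, rfl⟩
    · exact absurd ⟨i, by linarith⟩ hnb
    · exact .inr ⟨j - i, by linarith⟩

theorem zpow_eq_one_or_eq_pow_of_sq_eq_one {G : Type*} [Group G] {u : G} {g : ℕ}
    (hne : u ^ g ≠ 1) (hsq : (u ^ g) ^ 2 = 1) {t : ℤ} (ht : (u ^ t) ^ 2 = 1) :
    u ^ t = 1 ∨ u ^ t = u ^ g := by
  have h2t : (orderOf u : ℤ) ∣ 2 * t := by
    rw [orderOf_dvd_iff_zpow_eq_one, mul_comm, zpow_mul]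
    exact_mod_cast ht
  have h2g : (orderOf u : ℤ) ∣ 2 * g := by
    rw [orderOf_dvd_iff_zpow_eq_one, mul_comm, zpow_mul]
    exact_mod_cast hsq
  have hg : ¬ (orderOf u : ℤ) ∣ g := by
    rwa [orderOf_dvd_iff_zpow_eq_one, zpow_natCast]
  refine (Int.dvd_or_dvd_sub_of_dvd_two_mul h2t h2g hg).imp
    orderOf_dvd_iff_zpow_eq_one.mp fun h => ?_
  rwa [orderOf_dvd_iff_zpow_eq_one, zpow_sub, zpow_natCast, mul_inv_eq_one] at h

namespace ZMod

theorem two_pow_eq_neg_one (g : ℕ) : (2 : ZMod (2 ^ g + 1)) ^ g = -1 := by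
  have h : ((2 ^ g + 1 : ℕ) : ZMod (2 ^ g + 1)) = 0 := natCast_self _
  push_cast at h
  linear_combination h

theorem two_mul_two_pow_add_one (g : ℕ) : (2 : ZMod (2 ^ (g + 1) + 1)) * (2 ^ g + 1) = 1 := by
  linear_combination two_pow_eq_neg_one (g + 1)

def twoUnit (g : ℕ) : (ZMod (2 ^ (g + 1) + 1))ˣ :=
  Units.mkOfMulEqOne 2 (2 ^ g + 1) (two_mul_two_pow_add_one g)

theorem twoUnit_pow_eq_neg_one (g : ℕ) : twoUnit g ^ (g + 1) = -1 :=
  Units.ext (two_pow_eq_neg_one (g + 1))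

theorem val_twoUnit_zpow_sub (g s₁ s₂ : ℕ) :
    ((twoUnit g ^ ((s₂ : ℤ) - s₁) : (ZMod (2 ^ (g + 1) + 1))ˣ) : ZMod (2 ^ (g + 1) + 1)) =
      (2 ^ g + 1) ^ s₁ * 2 ^ s₂ := by
  rw [zpow_sub, zpow_natCast, zpow_natCast, ← inv_pow, mul_comm]
  rfl

end ZMod

/-- Let `g ≥ 2`, `c = 2^g + 1` and `d = 2^{g-1} + 1`.  If `δ² ≡ 1 (mod c)` and
`δ ≡ d^{s₁}·2^{s₂} (mod c)` for some nonnegative integers `s₁, s₂`, then `δ ≡ ±1 (mod c)`. -/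
theorem square_roots_of_one_in_d_two_group (g : ℕ) (hg : 2 ≤ g)
    (c d : ℕ) (hc : c = 2 ^ g + 1) (hd : d = 2 ^ (g - 1) + 1)
    (δ : ℤ) (hsq : Int.ModEq (c : ℤ) (δ ^ 2) 1)
    (hrep : ∃ s₁ s₂ : ℕ, Int.ModEq (c : ℤ) δ ((d : ℤ) ^ s₁ * 2 ^ s₂)) :
    Int.ModEq (c : ℤ) δ 1 ∨ Int.ModEq (c : ℤ) δ (-1) := by
  obtain ⟨s₁, s₂, hrep⟩ := hrep
  obtain ⟨k, rfl⟩ : ∃ k, g = k + 1 := ⟨g - 1, by omega⟩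
  subst hc hd
  have : Fact (2 < 2 ^ (k + 1) + 1) := ⟨by have := Nat.one_lt_two_pow k.succ_ne_zero; omega⟩
  have hδ : (δ : ZMod (2 ^ (k + 1) + 1)) = ↑(ZMod.twoUnit k ^ ((s₂ : ℤ) - s₁)) := by
    rw [ZMod.val_twoUnit_zpow_sub, (ZMod.intCast_eq_intCast_iff _ _ _).mpr hrep]
    push_cast
    rfl
  have hsq' : (ZMod.twoUnit k ^ ((s₂ : ℤ) - s₁)) ^ 2 = 1 :=
    Units.ext <| by simpa [← hδ] using (ZMod.intCast_eq_intCast_iff _ _ _).mpr hsq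
  have hne : ZMod.twoUnit k ^ (k + 1) ≠ 1 := by
    rw [ZMod.twoUnit_pow_eq_neg_one]
    exact fun h => ZMod.neg_one_ne_one (by simpa using congrArg Units.val h)
  have hsq_neg_one : (ZMod.twoUnit k ^ (k + 1)) ^ 2 = 1 := by
    rw [ZMod.twoUnit_pow_eq_neg_one, neg_one_sq]
  simp only [← ZMod.intCast_eq_intCast_iff, hδ, Int.cast_one, Int.cast_neg]
  rcases zpow_eq_one_or_eq_pow_of_sq_eq_one hne hsq_neg_one hsq' with h | h
  · left; rw [h, Units.val_one]
  · right; rw [h, ZMod.twoUnit_pow_eq_neg_one, Units.val_neg, Units.val_one]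
end

section
/- Let g be a positive even integer, c = 2^g + 1, and d = 2^{g−1} + 1. If x and y are nonnegative integers with d^x + 2^y ≡ 0 (mod c), then x ≡ y (mod 2). -/
/-!
In `ZMod c` we have `2 ^ g = -1` and `d * 2 = 1`, so multiplying the congruence by `2 ^ x` gives
`2 ^ (x + y) = -1`. Two exponents `m, n` with `a ^ m = a ^ n = -1 ≠ 1` have even sum: otherwise the
order of `a`, dividing both the odd number `m + n` and `2 * m`, would divide `m`, forcing `a ^ m = 1`.
Applied to `x + y` and the even `g`, this makes `x + y` even.
-/

theorem even_add_of_pow_eq_neg_one {M : Type*} [Monoid M] [HasDistribNeg M]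
    (hM : (-1 : M) ≠ 1) {a : M} {m n : ℕ} (hm : a ^ m = -1) (hn : a ^ n = -1) :
    Even (m + n) := by
  by_contra hodd
  have hcop : Nat.Coprime (orderOf a) 2 :=
    Nat.Coprime.coprime_dvd_left
      (orderOf_dvd_of_pow_eq_one (by rw [pow_add, hm, hn, neg_one_mul, neg_neg]))
      (Nat.coprime_two_right.mpr (Nat.not_even_iff_odd.mp hodd))
  have hdvd : orderOf a ∣ 2 * m :=
    orderOf_dvd_of_pow_eq_one (by rw [pow_mul', hm, neg_one_sq])
  exact hM (hm ▸ orderOf_dvd_iff_pow_eq_one.mp (hcop.dvd_of_dvd_mul_left hdvd))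

theorem ZMod.two_pow_eq_neg_one_s11 (g : ℕ) : (2 : ZMod (2 ^ g + 1)) ^ g = -1 := by
  rw [eq_neg_iff_add_eq_zero]
  exact_mod_cast ZMod.natCast_self (2 ^ g + 1)

theorem ZMod.two_pow_pred_add_one_mul_two {g : ℕ} (hg : 0 < g) :
    ((2 : ZMod (2 ^ g + 1)) ^ (g - 1) + 1) * 2 = 1 := by
  have h : (2 : ZMod (2 ^ g + 1)) ^ (g - 1) * 2 = 2 ^ g := by
    rw [← pow_succ, Nat.sub_add_cancel hg]
  linear_combination h + ZMod.two_pow_eq_neg_one_s11 g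

/-- Let `g` be a positive even integer, `c = 2^g + 1` and `d = 2^{g-1} + 1`.  If `x, y`
are nonnegative integers with `d^x + 2^y ≡ 0 (mod c)`, then `x ≡ y (mod 2)`. -/
theorem parity_match_of_congruence (g : ℕ) (hg : 0 < g) (hgeven : Even g)
    (c d : ℕ) (hc : c = 2 ^ g + 1) (hd : d = 2 ^ (g - 1) + 1)
    (x y : ℕ) (h : c ∣ d ^ x + 2 ^ y) :
    x % 2 = y % 2 := by
  subst hc hd
  have : Fact (2 < 2 ^ g + 1) := ⟨by have := Nat.one_lt_two_pow hg.ne'; omega⟩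
  have hsum : ((2 : ZMod (2 ^ g + 1)) ^ (g - 1) + 1) ^ x + 2 ^ y = 0 := by
    exact_mod_cast (ZMod.natCast_eq_zero_iff _ _).mpr h
  have hxy : (2 : ZMod (2 ^ g + 1)) ^ (x + y) = -1 := by
    have := congrArg (· * (2 : ZMod (2 ^ g + 1)) ^ x) hsum
    simp only [add_mul, zero_mul, ← mul_pow, ZMod.two_pow_pred_add_one_mul_two hg, one_pow] at this
    linear_combination this
  obtain ⟨l, hl⟩ := even_add_of_pow_eq_neg_one ZMod.neg_one_ne_one hxy (ZMod.two_pow_eq_neg_one_s11 g)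
  obtain ⟨k, hk⟩ := hgeven
  omega
end

section
/- Let p be an odd prime, let g be a positive even integer with 2^g ≡ −1 (mod p), and let d be an integer with 2d ≡ 1 (mod p). Let r be a primitive root modulo p, and let w_2 and w_d be positive integers with r^{w_2} ≡ 2 (mod p) and r^{w_d} ≡ d (mod p). Then v_2(w_d) = v_2(w_2) = v_2(p − 1) − v_2(g) − 1, where v_2 denotes the 2-adic valuation. -/
/-!
Since `r ^ (g * w₂) = 2 ^ g = -1 ≠ 1`, the order `p - 1` of `r` divides `2 g w₂` but not `g w₂`,
so `v₂(p - 1) = v₂(g) + v₂(w₂) + 1`. Since `r ^ (w_d + w₂) = d · 2 = 1`, also `p - 1 ∣ w_d + w₂`;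
as `2 ^ (v₂(w₂) + 1)` divides `p - 1`, the summands `w_d` and `w₂` have the same 2-adic valuation.
-/

theorem padicValNat_eq_succ_of_dvd_mul_of_not_dvd {q n a : ℕ} [hq : Fact q.Prime]
    (hdvd : n ∣ q * a) (hndvd : ¬ n ∣ a) : padicValNat q n = padicValNat q a + 1 := by
  have ha : a ≠ 0 := by rintro rfl; exact hndvd (dvd_zero n)
  have hn : n ≠ 0 := ne_zero_of_dvd_ne_zero (mul_ne_zero hq.out.ne_zero ha) hdvd
  have hle : n.factorization ≤ Finsupp.single q 1 + a.factorization := by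
    rwa [← hq.out.factorization, ← Nat.factorization_mul hq.out.ne_zero ha,
      Nat.factorization_le_iff_dvd hn (mul_ne_zero hq.out.ne_zero ha)]
  rw [← Nat.factorization_def n hq.out, ← Nat.factorization_def a hq.out]
  refine le_antisymm (by simpa [add_comm] using hle q)
    (Nat.succ_le_of_lt (not_le.mp fun hq_le => ?_))
  -- away from `q` the bound `hle` already says `n.factorization ≤ a.factorization`
  refine hndvd ((Nat.factorization_le_iff_dvd hn ha).mp fun ℓ => ?_)
  rcases eq_or_ne ℓ q with rfl | hℓ
  · exact hq_le
  · simpa [Finsupp.single_apply, hℓ.symm] using hle ℓ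

theorem padicValNat_eq_of_pow_succ_dvd_add {q a b : ℕ} [hq : Fact q.Prime] (hb : b ≠ 0)
    (h : q ^ (padicValNat q b + 1) ∣ a + b) : padicValNat q a = padicValNat q b := by
  have hb_dvd : q ^ padicValNat q b ∣ b := pow_padicValNat_dvd
  have ha_dvd : q ^ padicValNat q b ∣ a :=
    (Nat.dvd_add_left hb_dvd).mp ((pow_dvd_pow q (Nat.le_succ _)).trans h)
  have ha_ndvd : ¬ q ^ (padicValNat q b + 1) ∣ a := fun ha =>
    pow_succ_padicValNat_not_dvd hb ((Nat.dvd_add_right ha).mp h)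
  have ha : a ≠ 0 := by rintro rfl; exact ha_ndvd (dvd_zero _)
  rw [padicValNat_dvd_iff_le ha] at ha_dvd ha_ndvd
  omega

theorem IsPrimitiveRoot.padicValNat_two_eq_succ_of_pow_eq_neg_one {M : Type*} [CommMonoid M]
    [HasDistribNeg M] {ζ : M} {n a : ℕ} (hζ : IsPrimitiveRoot ζ n) (hM : (-1 : M) ≠ 1)
    (ha : ζ ^ a = -1) : padicValNat 2 n = padicValNat 2 a + 1 := by
  refine padicValNat_eq_succ_of_dvd_mul_of_not_dvd ?_ ?_
  · rw [← hζ.pow_eq_one_iff_dvd, pow_mul', ha, neg_one_sq]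
  · rwa [← hζ.pow_eq_one_iff_dvd, ha]

theorem two_adic_valuation_of_indices_general (p : ℕ) (hp : p.Prime) (hodd : Odd p)
    (g : ℕ)
    (h2g : Int.ModEq (p : ℤ) (2 ^ g) (-1))
    (d : ℤ) (hd : Int.ModEq (p : ℤ) (2 * d) 1)
    (r : ℤ) (hr : IsPrimitiveRoot ((r : ℤ) : ZMod p) (p - 1))
    (w₂ wd : ℕ)
    (hw₂ : Int.ModEq (p : ℤ) (r ^ w₂) 2) (hwd : Int.ModEq (p : ℤ) (r ^ wd) d) :
    (padicValNat 2 wd : ℤ) =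
        (padicValNat 2 (p - 1) : ℤ) - (padicValNat 2 g : ℤ) - 1 ∧
      (padicValNat 2 w₂ : ℤ) =
        (padicValNat 2 (p - 1) : ℤ) - (padicValNat 2 g : ℤ) - 1 := by
  have : Fact (2 < p) := ⟨hp.two_le.lt_of_ne fun h => by subst h; exact absurd hodd (by decide)⟩
  have e2g : (2 : ZMod p) ^ g = -1 := by simpa using (ZMod.intCast_eq_intCast_iff _ _ _).2 h2g
  have e2d : (2 : ZMod p) * d = 1 := by simpa using (ZMod.intCast_eq_intCast_iff _ _ _).2 hd
  have ew₂ : (r : ZMod p) ^ w₂ = 2 := by simpa using (ZMod.intCast_eq_intCast_iff _ _ _).2 hw₂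
  have ewd : (r : ZMod p) ^ wd = d := by simpa using (ZMod.intCast_eq_intCast_iff _ _ _).2 hwd
  have hneg : (r : ZMod p) ^ (g * w₂) = -1 := by rw [pow_mul', ew₂, e2g]
  have hgw₂ : g * w₂ ≠ 0 := by
    rintro h; rw [h, pow_zero] at hneg; exact ZMod.neg_one_ne_one hneg.symm
  obtain ⟨hg, hw₂0⟩ := mul_ne_zero_iff.mp hgw₂
  have hval := hr.padicValNat_two_eq_succ_of_pow_eq_neg_one ZMod.neg_one_ne_one hneg
  rw [padicValNat.mul hg hw₂0] at hval
  have hsum : p - 1 ∣ wd + w₂ := by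
    rw [← hr.pow_eq_one_iff_dvd, pow_add, ewd, ew₂, mul_comm, e2d]
  have hwd_val : padicValNat 2 wd = padicValNat 2 w₂ :=
    padicValNat_eq_of_pow_succ_dvd_add hw₂0
      ((pow_dvd_pow 2 (by omega)).trans (pow_padicValNat_dvd.trans hsum))
  omega

/-- Let `p` be an odd prime, `g` a positive even integer with `2^g ≡ -1 (mod p)`, and `d`
an integer with `2d ≡ 1 (mod p)`.  Let `r` be a primitive root modulo `p` and `w₂, w_d`
positive integers with `r^{w₂} ≡ 2 (mod p)` and `r^{w_d} ≡ d (mod p)`.  Then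
`v₂(w_d) = v₂(w₂) = v₂(p - 1) - v₂(g) - 1`. -/
theorem two_adic_valuation_of_indices (p : ℕ) (hp : p.Prime) (hodd : Odd p)
    (g : ℕ) (hg : 0 < g) (hgeven : Even g)
    (h2g : Int.ModEq (p : ℤ) (2 ^ g) (-1))
    (d : ℤ) (hd : Int.ModEq (p : ℤ) (2 * d) 1)
    (r : ℤ) (hr : IsPrimitiveRoot ((r : ℤ) : ZMod p) (p - 1))
    (w₂ wd : ℕ) (hw₂pos : 0 < w₂) (hwdpos : 0 < wd)
    (hw₂ : Int.ModEq (p : ℤ) (r ^ w₂) 2) (hwd : Int.ModEq (p : ℤ) (r ^ wd) d) :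
    (padicValNat 2 wd : ℤ) =
        (padicValNat 2 (p - 1) : ℤ) - (padicValNat 2 g : ℤ) - 1 ∧
      (padicValNat 2 w₂ : ℤ) =
        (padicValNat 2 (p - 1) : ℤ) - (padicValNat 2 g : ℤ) - 1 :=
  two_adic_valuation_of_indices_general p hp hodd g h2g d hd r hr w₂ wd hw₂ hwd
end

section
/- Let u, C, ν be positive integers with u and C odd and gcd(u, C) = 1, and suppose 4u² − C² = ε·3^ν with ε ∈ {1, −1}. Then ε = 1, ν is odd, C = (3^ν − 1)/2, and u = (3^ν + 1)/4. -/
/-!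
Write `4u² - C² = (2u - C)(2u + C)`. The two factors are coprime, since `C` is odd and
`gcd(u, C) = 1`, and their product is `±3^ν`; as `2u + C ≥ 3` is not a unit, the prime `3`
divides it and so cannot divide `2u - C`, which is therefore `±1`. Hence `2u - C = ε` and
`2u + C = 3^ν`, so `4u = 3^ν + ε`. Modulo `8`, `3^ν` is `1` or `3` according to the parity of `ν`,
and `4u ≡ 4` because `u` is odd; this forces `ε = 1` and `ν` odd.
-/

theorem IsCoprime.sub_add_of_isCoprime_two {R : Type*} [CommRing R] {x y : R}
    (hxy : IsCoprime x y) (h2 : IsCoprime (x - y) 2) : IsCoprime (x - y) (x + y) := by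
  have hsub : IsCoprime (x - y) y := by
    simpa using (IsCoprime.sub_mul_left_left_iff (z := 1)).2 hxy
  have h := (h2.mul_right hsub).add_mul_left_right 1
  rwa [mul_one, show 2 * y + (x - y) = x + y by ring] at h

theorem IsCoprime.isUnit_of_mul_dvd_prime_pow {R : Type*} [CommRing R] [IsDomain R] {a b p : R}
    (hp : Prime p) {n : ℕ} (hab : IsCoprime a b) (hdvd : a * b ∣ p ^ n) (hb : ¬IsUnit b) :
    IsUnit a := by
  obtain ⟨i, -, hbi⟩ := (dvd_prime_pow hp n).1 (dvd_of_mul_left_dvd hdvd)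
  have hi : i ≠ 0 := by
    rintro rfl
    exact hb (associated_one_iff_isUnit.1 (by simpa using hbi))
  have hpb : p ∣ b := (dvd_pow_self p hi).trans hbi.symm.dvd
  exact ((hab.of_isCoprime_of_dvd_right hpb).pow_right (n := n)).isUnit_of_dvd' dvd_rfl
    (dvd_of_mul_right_dvd hdvd)

theorem Int.three_pow_emod_eight_of_even {n : ℕ} (hn : Even n) : (3 : ℤ) ^ n % 8 = 1 := by
  obtain ⟨m, rfl⟩ := hn
  rw [← two_mul, pow_mul]
  simpa [Int.ModEq] using Int.ModEq.pow m (show (3 : ℤ) ^ 2 ≡ 1 [ZMOD 8] by decide)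

theorem Int.three_pow_emod_eight_of_odd {n : ℕ} (hn : Odd n) : (3 : ℤ) ^ n % 8 = 3 := by
  obtain ⟨m, rfl⟩ := hn
  have h : (3 : ℤ) ^ (2 * m) % 8 = 1 := Int.three_pow_emod_eight_of_even (even_two_mul m)
  rw [pow_succ, Int.mul_emod, h]
  norm_num

theorem Int.eq_one_and_odd_of_three_pow_add_eq_four_mul {u ε : ℤ} {n : ℕ} (hu : Odd u)
    (hε : ε = 1 ∨ ε = -1) (h : 3 ^ n + ε = 4 * u) : ε = 1 ∧ Odd n := by
  obtain ⟨k, rfl⟩ := hu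
  rcases Nat.even_or_odd n with hn | hn
  · have := Int.three_pow_emod_eight_of_even hn
    omega
  · have := Int.three_pow_emod_eight_of_odd hn
    exact ⟨by omega, hn⟩

theorem case_one_shape_general (u C : ℤ) (ν : ℕ) (hu : 0 < u) (hC : 0 < C)
    (huodd : Odd u) (hCodd : Odd C) (hcop : IsCoprime u C)
    (ε : ℤ) (hε : ε = 1 ∨ ε = -1)
    (heq : 4 * u ^ 2 - C ^ 2 = ε * 3 ^ ν) :
    ε = 1 ∧ Odd ν ∧ 2 * C = 3 ^ ν - 1 ∧ 4 * u = 3 ^ ν + 1 := by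
  have hfactor : (2 * u - C) * (2 * u + C) = ε * 3 ^ ν := by rw [← heq]; ring
  have hcop' : IsCoprime (2 * u - C) (2 * u + C) :=
    ((Int.isCoprime_two_left.2 hCodd).mul_left hcop).sub_add_of_isCoprime_two
      (Int.isCoprime_two_right.2 ((even_two_mul u).sub_odd hCodd))
  have hdvd : (2 * u - C) * (2 * u + C) ∣ 3 ^ ν :=
    hfactor ▸ (Int.isUnit_iff.2 hε).mul_left_dvd.2 dvd_rfl
  have hunit : IsUnit (2 * u - C) :=
    hcop'.isUnit_of_mul_dvd_prime_pow Int.prime_three hdvd (by rw [Int.isUnit_iff]; omega)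
  obtain ⟨hdiff, hsum⟩ : 2 * u - C = ε ∧ 2 * u + C = 3 ^ ν := by
    have hpos : (0 : ℤ) < 3 ^ ν := by positivity
    rcases Int.isUnit_iff.1 hunit with h | h <;> rcases hε with rfl | rfl <;>
      rw [h] at hfactor <;> constructor <;> linarith
  obtain ⟨rfl, hν⟩ :=
    Int.eq_one_and_odd_of_three_pow_add_eq_four_mul huodd hε (by linarith)
  exact ⟨rfl, hν, by linarith, by linarith⟩

/-- Let `u, C, ν` be positive integers with `u, C` odd and `gcd(u, C) = 1`, and suppose
`4u² - C² = ε·3^ν` with `ε = ±1`.  Then `ε = 1`, `ν` is odd, `C = (3^ν - 1)/2` and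
`u = (3^ν + 1)/4`. -/
theorem case_one_shape (u C : ℤ) (ν : ℕ) (hu : 0 < u) (hC : 0 < C) (hν : 0 < ν)
    (huodd : Odd u) (hCodd : Odd C) (hcop : IsCoprime u C)
    (ε : ℤ) (hε : ε = 1 ∨ ε = -1)
    (heq : 4 * u ^ 2 - C ^ 2 = ε * 3 ^ ν) :
    ε = 1 ∧ Odd ν ∧ 2 * C = 3 ^ ν - 1 ∧ 4 * u = 3 ^ ν + 1 :=
  case_one_shape_general u C ν hu hC huodd hCodd hcop ε hε heq
end

section
/- Let ν > 1 be an odd integer, let c > 1 be an odd integer, and let z_1 be a positive integer with c^{z_1} = (3^ν − 1)/2. Put A_1 = 3·(3^{ν−1} − 1)/8 and B_1 = (3^{ν+1} − 1)/8. Then there do not exist a positive integer z_2 and positive integers A_2, B_2 with B_2 − A_2 = 1, A_2 + B_2 = c^{z_2}, and the set of primes dividing A_2·B_2 equal to the set of primes dividing A_1·B_1. -/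
/-!
Write `N = c^{z₁}`, so that `3^ν = 2N + 1`, `4A₁ = N - 1`, `4B₁ = 3N + 1` and `2A₂ + 1 = c^{z₂}`.

If `z₁` is odd, `3^ν ≡ 3 (mod 8)` gives `N + 1 ≡ 2 (mod 4)`, so `c + 1 ∣ N + 1` has an odd prime
factor `p`. It divides `c^{2z₂} - 1 = 4A₂B₂`, but not `16A₁B₁ = (N - 1)(3N + 1)`.

If `z₁` is even, `3^ν = 2M² + 1` is a solution of the Pell equation `3x² - 2y² = 1` with `x` a
power of `3`; reducing all solutions modulo `459` leaves only `ν = 1, 5`. So `ν = 5`, `c = 11` and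
`A₁B₁ = 30 · 91`. Then `7 ∣ A₂B₂` forces `3 ∣ z₂`, whence `19 ∣ 11^{z₂} - 1 = 2A₂`, although
`19 ∤ A₁B₁`.
-/

/-- The residues modulo `459 = 27 · 17` of the solutions of `3x² = 2y² + 1`: the orbit of `(1, 1)`
under `(x, y) ↦ (5x + 4y, 6x + 5y)`, i.e. multiplication of `x√3 + y√2` by the unit `5 + 2√6`.
On this orbit `27 ∣ x` forces `17 ∣ x`, which no power of `3` satisfies. -/
def pellResidues : List (ℕ × ℕ) :=
  [(1, 1), (9, 11), (89, 109), (422, 161), (0, 124), (37, 161), (370, 109), (450, 11),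
   (458, 1), (458, 458), (450, 448), (370, 350), (37, 298), (0, 335), (422, 298),
   (89, 350), (9, 448), (1, 458)]

theorem pellResidues_step_mem :
    ∀ q ∈ pellResidues, ((5 * q.1 + 4 * q.2) % 459, (6 * q.1 + 5 * q.2) % 459) ∈ pellResidues := by
  decide

theorem pellResidues_fst_ne_three : ∀ q ∈ pellResidues, q.1 ≠ 3 := by
  decide

theorem pellResidues_fst_eq_zero_of_mod_27 : ∀ q ∈ pellResidues, q.1 % 27 = 0 → q.1 = 0 := by
  decide

theorem exists_pell_descent {x y : ℕ} (h : 3 * x ^ 2 = 2 * y ^ 2 + 1) (hx : 3 ≤ x) :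
    ∃ a b, a < x ∧ 3 * a ^ 2 = 2 * b ^ 2 + 1 ∧ 5 * a + 4 * b = x ∧ 6 * a + 5 * b = y := by
  have hxy : x < y := by nlinarith
  have h45 : 4 * y < 5 * x := by nlinarith
  have h65 : 6 * x < 5 * y := by nlinarith
  refine ⟨5 * x - 4 * y, 5 * y - 6 * x, by omega, ?_, by omega, by omega⟩
  zify [h45.le, h65.le] at h ⊢
  linear_combination h

theorem pell_mod_mem_pellResidues {x y : ℕ} (h : 3 * x ^ 2 = 2 * y ^ 2 + 1) :
    (x % 459, y % 459) ∈ pellResidues := by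
  induction x using Nat.strong_induction_on generalizing y with
  | _ x ih =>
    rcases Nat.lt_or_ge x 3 with hx | hx
    · have hy : y ^ 2 = 1 := by interval_cases x <;> omega
      obtain rfl : x = 1 := by interval_cases x <;> omega
      obtain rfl : y = 1 := by simpa using hy
      decide
    · obtain ⟨a, b, hax, hab, rfl, rfl⟩ := exists_pell_descent h hx
      have := pellResidues_step_mem _ (ih a hax hab)
      convert this using 2 <;> omega

theorem eq_zero_or_eq_two_of_pell_three_pow {k y : ℕ} (h : 3 * (3 ^ k) ^ 2 = 2 * y ^ 2 + 1) :
    k = 0 ∨ k = 2 := by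
  have hmem := pell_mod_mem_pellResidues h
  rcases (by omega : k = 0 ∨ k = 1 ∨ k = 2 ∨ 3 ≤ k) with rfl | rfl | rfl | hk
  · exact .inl rfl
  · exact absurd rfl (pellResidues_fst_ne_three _ hmem)
  · exact .inr rfl
  · have h27 : 27 ∣ 3 ^ k := pow_dvd_pow 3 hk
    have h459 := pellResidues_fst_eq_zero_of_mod_27 _ hmem (by omega)
    have h17 : 17 ∣ 3 := (by norm_num : Nat.Prime 17).dvd_of_dvd_pow
      (m := 3) (n := k) (by omega)
    norm_num at h17

theorem eleven_pow_mod_133 (z : ℕ) : 11 ^ z % 133 = 1 ∨ 11 ^ z % 133 = 11 ∨ 11 ^ z % 133 = 121 := by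
  induction z with
  | zero => decide
  | succ z ih => rw [pow_succ]; omega

/-- `11` has order `3` modulo both `7` and `19`. -/
theorem nineteen_dvd_of_seven_dvd_mul_succ {A z : ℕ} (h : 2 * A + 1 = 11 ^ z)
    (h7 : 7 ∣ A * (A + 1)) : 19 ∣ A := by
  rcases (by norm_num : Nat.Prime 7).dvd_mul.mp h7 with h7 | h7 <;>
    rcases eleven_pow_mod_133 z with h' | h' | h' <;> omega

theorem dvd_mul_succ_of_dvd_add_one {p c A z : ℕ} (hodd : Odd p) (hpc : p ∣ c + 1)
    (h : 2 * A + 1 = c ^ z) : p ∣ A * (A + 1) := by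
  have hc : c + 1 ∣ (c ^ 2) ^ z - 1 :=
    (Dvd.intro (c - 1) (by simpa using (Nat.sq_sub_sq c 1).symm)).trans
      (by simpa using Nat.sub_dvd_pow_sub_pow (c ^ 2) 1 z)
  have h4 : (c ^ 2) ^ z - 1 = 4 * (A * (A + 1)) := by
    rw [← pow_mul, mul_comm, pow_mul, ← h]; ring_nf; omega
  have hp4 : p.Coprime 4 := by simpa using Nat.Coprime.pow_right 2 hodd.coprime_two_right
  exact hp4.dvd_of_dvd_mul_left (h4 ▸ hpc.trans hc)

theorem not_dvd_mul_of_dvd_add_one {p N A B : ℕ} (hp : p.Prime) (hodd : Odd p) (hpN : p ∣ N + 1)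
    (hA : 4 * A + 1 = N) (hB : 4 * B = 3 * N + 1) : ¬ p ∣ A * B := by
  have hp2 : ¬ p ∣ 2 := fun h => hp.ne_one (hodd.coprime_two_right.eq_one_of_dvd h)
  intro hAB
  rcases hp.dvd_mul.mp hAB with hpA | hpB
  · have : p ∣ 4 * A + 2 := by rw [show 4 * A + 2 = N + 1 by omega]; exact hpN
    exact hp2 ((Nat.dvd_add_right (hpA.mul_left 4)).mp this)
  · have : p ∣ 4 * B + 2 := by rw [show 4 * B + 2 = 3 * (N + 1) by omega]; exact hpN.mul_left 3
    exact hp2 ((Nat.dvd_add_right (hpB.mul_left 4)).mp this)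

theorem three_pow_mod_eight_of_odd {ν : ℕ} (hν : Odd ν) : 3 ^ ν % 8 = 3 := by
  obtain ⟨m, rfl⟩ := hν
  rw [pow_succ, pow_mul, Nat.mul_mod, Nat.pow_mod]
  norm_num

theorem eq_five_and_eq_eleven_of_three_pow_eq {ν c t : ℕ} (hν : Odd ν) (hν1 : 1 < ν)
    (h : 3 ^ ν = 2 * (c ^ t) ^ 2 + 1) : ν = 5 ∧ c = 11 := by
  obtain ⟨k, rfl⟩ := hν
  rcases eq_zero_or_eq_two_of_pell_three_pow (k := k) (y := c ^ t) (by rw [← h]; ring)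
    with rfl | rfl
  · omega
  · have hsq : (c ^ t) ^ 2 = 11 ^ 2 := by omega
    exact ⟨rfl, ((by norm_num : Nat.Prime 11).pow_eq_iff.mp
      (Nat.pow_left_injective two_ne_zero hsq)).1⟩

theorem case_one_and_case_two_mutually_exclusive_general
    (ν : ℕ) (hν : Odd ν) (hν1 : 1 < ν) (c : ℕ) (hc : 1 < c)
    (z₁ : ℕ) (hcz : 2 * c ^ z₁ = 3 ^ ν - 1)
    (A₁ B₁ : ℕ) (hA₁ : 8 * A₁ = 3 * (3 ^ (ν - 1) - 1)) (hB₁ : 8 * B₁ = 3 ^ (ν + 1) - 1) :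
    ¬ ∃ z₂ A₂ B₂ : ℕ, 0 < z₂ ∧ 0 < A₂ ∧ 0 < B₂ ∧ B₂ = A₂ + 1 ∧
      A₂ + B₂ = c ^ z₂ ∧
      (∀ p : ℕ, p.Prime → (p ∣ A₂ * B₂ ↔ p ∣ A₁ * B₁)) := by
  rintro ⟨z₂, A₂, B₂, -, -, -, rfl, hsum, hprimes⟩
  have h3ν : 3 ^ ν = 2 * c ^ z₁ + 1 := by have := Nat.one_le_pow ν 3 (by norm_num); omega
  have hA : 4 * A₁ + 1 = c ^ z₁ := by
    have : 3 * 3 ^ (ν - 1) = 3 ^ ν := by rw [← pow_succ']; congr 1; omega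
    omega
  have hB : 4 * B₁ = 3 * c ^ z₁ + 1 := by rw [pow_succ] at hB₁; omega
  have hA₂ : 2 * A₂ + 1 = c ^ z₂ := by omega
  rcases Nat.even_or_odd z₁ with ⟨t, rfl⟩ | hz₁
  · rw [← two_mul, pow_mul'] at h3ν hA hB
    obtain ⟨rfl, rfl⟩ := eq_five_and_eq_eleven_of_three_pow_eq hν hν1 h3ν
    obtain ⟨rfl, rfl⟩ : A₁ = 30 ∧ B₁ = 91 := by norm_num at h3ν; omega
    have h7 := (hprimes 7 (by norm_num)).mpr (by norm_num)
    have h19 :=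
      (hprimes 19 (by norm_num)).mp ((nineteen_dvd_of_seven_dvd_mul_succ hA₂ h7).mul_right _)
    norm_num at h19
  · have hc1 : c + 1 ∣ c ^ z₁ + 1 := by simpa using hz₁.nat_add_dvd_pow_add_pow c 1
    have h4 : ¬ 4 ∣ c ^ z₁ + 1 := by have := three_pow_mod_eight_of_odd hν; omega
    obtain h4c | ⟨p, hp, hpc, hodd⟩ :=
      Nat.four_dvd_or_exists_odd_prime_and_dvd_of_two_lt (n := c + 1) (by omega)
    · exact h4 (h4c.trans hc1)
    · exact not_dvd_mul_of_dvd_add_one hp hodd (hpc.trans hc1) hA hB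
        ((hprimes p hp).mp (dvd_mul_succ_of_dvd_add_one hodd hpc hA₂))

/-- **Mutual exclusivity of Cases 1 and 2.**  Let `ν > 1` be odd, `c > 1` odd and `z₁ > 0`
with `c^{z₁} = (3^ν - 1)/2`, and put `A₁ = 3·(3^{ν-1} - 1)/8`, `B₁ = (3^{ν+1} - 1)/8`.
Then there are no positive integers `z₂, A₂, B₂` with `B₂ = A₂ + 1`, `A₂ + B₂ = c^{z₂}`
and the set of primes dividing `A₂·B₂` equal to the set of primes dividing `A₁·B₁`. -/
theorem case_one_and_case_two_mutually_exclusive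
    (ν : ℕ) (hν : Odd ν) (hν1 : 1 < ν) (c : ℕ) (hc : 1 < c) (hcodd : Odd c)
    (z₁ : ℕ) (hz₁ : 0 < z₁) (hcz : 2 * c ^ z₁ = 3 ^ ν - 1)
    (A₁ B₁ : ℕ) (hA₁ : 8 * A₁ = 3 * (3 ^ (ν - 1) - 1)) (hB₁ : 8 * B₁ = 3 ^ (ν + 1) - 1) :
    ¬ ∃ z₂ A₂ B₂ : ℕ, 0 < z₂ ∧ 0 < A₂ ∧ 0 < B₂ ∧ B₂ = A₂ + 1 ∧
      A₂ + B₂ = c ^ z₂ ∧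
      (∀ p : ℕ, p.Prime → (p ∣ A₂ * B₂ ↔ p ∣ A₁ * B₁)) :=
  case_one_and_case_two_mutually_exclusive_general ν hν hν1 c hc z₁ hcz A₁ B₁ hA₁ hB₁
end

section
/- The only triples (X, Y, z) of positive integers with z ≥ 1, X < Y, X + Y = 13^z, X = 10^{x_1}·3^{x_2} and Y = 10^{y_1}·3^{y_2} for some nonnegative integers x_1, x_2, y_1, y_2 with min(x_1, y_1) = min(x_2, y_2) = 0 and max(x_1, y_1) > 0 and max(x_2, y_2) > 0, are (X, Y, z) = (3, 10, 1) and (X, Y, z) = (10, 3^7, 3). -/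
/-!
Up to the order of the summands, the equation reads `13 ^ z = 1 + 10 ^ b * 3 ^ c` or
`13 ^ z = 3 ^ a + 10 ^ b` with `b ≥ 1`. The first is impossible: modulo 5 it forces `4 ∣ z`, and
then `7 ∣ 13 ^ z - 1 = 10 ^ b * 3 ^ c`. In the second, `b ≥ 2` is excluded by a finite check modulo
`1100 = 100 * 11`, where `13` and `3` have order dividing 20 and `10 ^ b` only depends on the
parity of `b`. For `b = 1` and `a ≥ 8`, `13 ^ z ≡ 10 [MOD 3 ^ 8]` forces `z ≡ 1461 [MOD 3 ^ 7]`;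
modulo the prime `17497`, where `13` has order `4 * 3 ^ 7` and `3` has order `3 ^ 6`, no such `z`
makes `13 ^ z ≡ 3 ^ a + 10`. The cases `a < 8` are checked directly.
-/

theorem Nat.ModEq.pow_modEq_pow_mod {b d n : ℕ} (h : b ^ d ≡ 1 [MOD n]) (z : ℕ) :
    b ^ z ≡ b ^ (z % d) [MOD n] := by
  rw [← ZMod.natCast_eq_natCast_iff] at h ⊢
  push_cast at h ⊢
  exact pow_eq_pow_mod z h

lemma mod_eq_of_thirteen_pow_modEq_ten {z : ℕ} (h : 13 ^ z ≡ 10 [MOD 3 ^ 8]) :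
    z % 2187 = 1461 := by
  have key : ∀ r < 2187, 13 ^ r % 6561 = 10 → r = 1461 := by decide +kernel
  exact key _ (Nat.mod_lt _ (by norm_num))
    ((Nat.ModEq.pow_modEq_pow_mod (by decide +kernel) z).symm.trans h)

lemma thirteen_pow_not_modEq_three_pow_add_ten {z : ℕ} (hz : z % 2187 = 1461) (a : ℕ) :
    ¬ 13 ^ z ≡ 3 ^ a + 10 [MOD 17497] := by
  have key : ∀ q < 4, ∀ s < 729, 13 ^ (2187 * q + 1461) % 17497 ≠ (3 ^ s + 10) % 17497 := by
    decide +kernel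
  intro h
  have h13 : 13 ^ z ≡ 13 ^ (z % 8748) [MOD 17497] := .pow_modEq_pow_mod (by decide +kernel) z
  rw [show z % 8748 = 2187 * (z % 8748 / 2187) + 1461 by omega] at h13
  have h3 : 3 ^ a + 10 ≡ 3 ^ (a % 729) + 10 [MOD 17497] :=
    (Nat.ModEq.pow_modEq_pow_mod (by decide +kernel) a).add_right 10
  exact key _ (by omega) _ (Nat.mod_lt _ (by norm_num)) (h13.symm.trans (h.trans h3))

lemma thirteen_pow_eq_three_pow_add_ten {z a : ℕ} (h : 13 ^ z = 3 ^ a + 10) :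
    (z = 1 ∧ a = 1) ∨ (z = 3 ∧ a = 7) := by
  by_cases ha : a < 8
  · have hz : z < 4 := by
      have h3a : 3 ^ a < 3 ^ 8 := Nat.pow_lt_pow_right (by norm_num) ha
      exact (Nat.pow_lt_pow_iff_right (by norm_num)).mp (by omega : 13 ^ z < 13 ^ 4)
    have key : ∀ z < 4, ∀ a < 8, 13 ^ z = 3 ^ a + 10 → (z = 1 ∧ a = 1) ∨ (z = 3 ∧ a = 7) := by
      decide
    exact key z hz a ha h
  · have h8 : 13 ^ z ≡ 10 [MOD 3 ^ 8] := by
      rw [h]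
      simpa using (Nat.modEq_zero_iff_dvd.mpr (pow_dvd_pow 3 (not_lt.mp ha))).add_right 10
    exact (thirteen_pow_not_modEq_three_pow_add_ten (mod_eq_of_thirteen_pow_modEq_ten h8) a
      (h ▸ Nat.ModEq.refl _)).elim

lemma thirteen_pow_ne_three_pow_add_ten_pow {b : ℕ} (hb : 2 ≤ b) (z a : ℕ) :
    13 ^ z ≠ 3 ^ a + 10 ^ b := by
  have key : ∀ r < 20, ∀ s < 20, ∀ t < 2, 13 ^ r % 1100 ≠ (3 ^ s + 100 * 10 ^ t) % 1100 := by
    decide +kernel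
  obtain ⟨c, rfl⟩ := Nat.exists_eq_add_of_le hb
  intro h
  have h13 : 13 ^ z ≡ 13 ^ (z % 20) [MOD 1100] := .pow_modEq_pow_mod (by decide) z
  have h3 : 3 ^ a ≡ 3 ^ (a % 20) [MOD 1100] := .pow_modEq_pow_mod (by decide) a
  have h10 : 100 * 10 ^ c ≡ 100 * 10 ^ (c % 2) [MOD 100 * 11] :=
    (Nat.ModEq.pow_modEq_pow_mod (by decide) c).mul_left' 100
  refine key (z % 20) (Nat.mod_lt _ (by norm_num)) (a % 20) (Nat.mod_lt _ (by norm_num)) (c % 2)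
    (Nat.mod_lt _ (by norm_num)) ?_
  calc 13 ^ (z % 20) ≡ 13 ^ z [MOD 1100] := h13.symm
    _ = 3 ^ a + 100 * 10 ^ c := by rw [h, pow_add]; ring
    _ ≡ 3 ^ (a % 20) + 100 * 10 ^ (c % 2) [MOD 1100] := h3.add h10

lemma thirteen_pow_eq_three_pow_add_ten_pow {z a b : ℕ} (hb : 0 < b)
    (h : 13 ^ z = 3 ^ a + 10 ^ b) :
    b = 1 ∧ ((z = 1 ∧ a = 1) ∨ (z = 3 ∧ a = 7)) := by
  obtain rfl | hb2 : b = 1 ∨ 2 ≤ b := by omega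
  · exact ⟨rfl, thirteen_pow_eq_three_pow_add_ten (by simpa using h)⟩
  · exact absurd h (thirteen_pow_ne_three_pow_add_ten_pow hb2 z a)

lemma thirteen_pow_ne_one_add_ten_pow_mul {b m : ℕ} (hb : 0 < b) (hm : ¬ 7 ∣ m) (z : ℕ) :
    13 ^ z ≠ 1 + 10 ^ b * m := by
  intro h
  have h5 : 13 ^ (z % 4) ≡ 1 [MOD 5] :=
    calc 13 ^ (z % 4) ≡ 13 ^ z [MOD 5] := (Nat.ModEq.pow_modEq_pow_mod (by decide) z).symm
      _ = 1 + 10 ^ b * m := h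
      _ ≡ 1 [MOD 5] := by
        simpa using (Nat.modEq_zero_iff_dvd.mpr
          ((dvd_pow (by norm_num : 5 ∣ 10) hb.ne').mul_right m)).add_left 1
  have hz : z % 4 = 0 := by
    have key : ∀ r < 4, 13 ^ r % 5 = 1 → r = 0 := by decide
    exact key _ (Nat.mod_lt _ (by norm_num)) h5
  have h7 : 1 + 10 ^ b * m ≡ 1 + 0 [MOD 7] :=
    calc 1 + 10 ^ b * m = 13 ^ z := h.symm
      _ ≡ 13 ^ (z % 4) [MOD 7] := .pow_modEq_pow_mod (by decide) z
      _ = 1 + 0 := by rw [hz]; rfl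
  have h7m : 7 ∣ 10 ^ b * m := Nat.modEq_zero_iff_dvd.mp (h7.add_left_cancel' 1)
  exact hm ((Nat.Coprime.pow_right b (by norm_num : Nat.Coprime 7 10)).dvd_of_dvd_mul_left h7m)

/-- The only triples `(X, Y, z)` of positive integers with `z ≥ 1`, `X < Y`,
`X + Y = 13^z`, `X = 10^{x₁}·3^{x₂}`, `Y = 10^{y₁}·3^{y₂}` with
`min(x₁,y₁) = min(x₂,y₂) = 0`, `max(x₁,y₁) > 0`, `max(x₂,y₂) > 0`, are `(3, 10, 1)` and
`(10, 3^7, 3)`. -/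
theorem only_two_solutions_ten_three_thirteen :
    ∀ X Y z : ℕ,
      ((0 < X ∧ 0 < Y ∧ 1 ≤ z ∧ X < Y ∧ X + Y = 13 ^ z ∧
        ∃ x₁ x₂ y₁ y₂ : ℕ, X = 10 ^ x₁ * 3 ^ x₂ ∧ Y = 10 ^ y₁ * 3 ^ y₂ ∧
          min x₁ y₁ = 0 ∧ min x₂ y₂ = 0 ∧ 0 < max x₁ y₁ ∧ 0 < max x₂ y₂) ↔
      ((X, Y, z) = (3, 10, 1) ∨ (X, Y, z) = (10, 3 ^ 7, 3))) := by
  intro X Y z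
  constructor
  · rintro ⟨hX, -, -, hXY, hsum, x₁, x₂, y₁, y₂, rfl, rfl, hx, hy, h₁, -⟩
    rcases Nat.min_eq_zero_iff.mp hx with rfl | rfl <;>
      rcases Nat.min_eq_zero_iff.mp hy with rfl | rfl <;>
      simp only [pow_zero, one_mul, mul_one, Nat.zero_max, Nat.max_zero] at hX hXY hsum h₁ ⊢
    · exact (thirteen_pow_ne_one_add_ten_pow_mul h₁
        (fun h ↦ absurd (Nat.Prime.dvd_of_dvd_pow (by norm_num) h) (by norm_num)) z hsum.symm).elim
    · obtain ⟨rfl, ⟨rfl, rfl⟩ | ⟨rfl, rfl⟩⟩ := thirteen_pow_eq_three_pow_add_ten_pow h₁ hsum.symm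
      · exact Or.inl rfl
      · norm_num at hXY
    · obtain ⟨rfl, ⟨rfl, rfl⟩ | ⟨rfl, rfl⟩⟩ :=
        thirteen_pow_eq_three_pow_add_ten_pow h₁ (by rw [← hsum, add_comm])
      · norm_num at hXY
      · exact Or.inr rfl
    · omega
  · rintro (h | h) <;> simp only [Prod.mk.injEq] at h <;> obtain ⟨rfl, rfl, rfl⟩ := h
    · exact ⟨by norm_num, by norm_num, le_rfl, by norm_num, rfl, 0, 1, 1, 0, by norm_num⟩
    · exact ⟨by norm_num, by norm_num, by norm_num, by norm_num, rfl, 1, 0, 0, 7, by norm_num⟩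
end

section
/- Let r ≥ 2 and m ≥ 3 be integers with m·r ≠ 6. If (2^{m·r} − 1)/(2^r − 1) is a prime power, then m is a prime p and r = p^t for some integer t ≥ 1. -/
/-!
Write `(b^(mr) - 1)/(b^r - 1) = q^a` with `q` an odd prime and let `e` be the order of `b`
modulo `q`. Lifting the exponent gives `v_q(b^k - 1) = v_q(b^e - 1) + v_q(k/e)` whenever `e ∣ k`.
If `e ∣ r` this yields `a = v_q(m)`, so `q^a ≤ m`; if `e ∤ r` and `e < mr`, it yields
`q^a ≤ (b^e - 1) q^(v_q(mr/e))`. Both contradict `q^a ≥ b^(mr - r)`, so `e = mr`. Then for a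
proper divisor `d` of `mr`, `b^d - 1` is prime to `q` and divides `(b^r - 1) q^a`, hence divides
`b^r - 1`, i.e. `d ∣ r`. Applied to `d = mr/ℓ` for a prime `ℓ ∣ mr`, this forces `ℓ = m`.
-/

namespace Nat

lemma dvd_of_pow_sub_one_dvd_pow_sub_one {b d r : ℕ} (hb : 2 ≤ b) (h : b ^ d - 1 ∣ b ^ r - 1) :
    d ∣ r := by
  have hgcd : b ^ gcd d r - 1 = b ^ d - 1 := by
    rw [← pow_sub_one_gcd_pow_sub_one, Nat.gcd_eq_left h]
  have h1 := one_le_pow (gcd d r) b (by omega)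
  have h2 := one_le_pow d b (by omega)
  exact Nat.gcd_eq_left_iff_dvd.mp (Nat.pow_right_injective hb (show b ^ gcd d r = b ^ d by omega))

lemma pow_sub_le_of_mul_eq_pow_sub_one {b r n N : ℕ} (hb : 2 ≤ b) (hr : 1 ≤ r) (hrn : r ≤ n)
    (hN : (b ^ r - 1) * N = b ^ n - 1) : b ^ (n - r) ≤ N := by
  have hpos : 0 < b ^ r - 1 := by
    have := Nat.pow_le_pow_right (by omega : 0 < b) hr
    rw [pow_one] at this; omega
  refine le_of_mul_le_mul_left ?_ hpos
  rw [hN, Nat.sub_mul, one_mul, ← pow_add, Nat.add_sub_cancel' hrn]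
  have := one_le_pow (n - r) b (by omega)
  omega

lemma dvd_pow_sub_one_iff_orderOf_dvd {q b k : ℕ} (hb : 1 ≤ b) :
    q ∣ b ^ k - 1 ↔ orderOf (b : ZMod q) ∣ k := by
  rw [← ZMod.natCast_eq_zero_iff, Nat.cast_sub (one_le_pow k b hb), sub_eq_zero,
    orderOf_dvd_iff_pow_eq_one]
  push_cast
  rfl

end Nat

lemma padicValNat_pow_sub_one_of_orderOf_dvd {q b k : ℕ} [Fact q.Prime] (hq : Odd q) (hb : 2 ≤ b)
    (hk : k ≠ 0) (hek : orderOf (b : ZMod q) ∣ k) :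
    padicValNat q (b ^ k - 1) =
      padicValNat q (b ^ orderOf (b : ZMod q) - 1) + padicValNat q (k / orderOf (b : ZMod q)) := by
  set e := orderOf (b : ZMod q)
  obtain ⟨s, rfl⟩ := hek
  have he : 0 < e := Nat.pos_of_ne_zero (left_ne_zero_of_mul hk)
  have hqe : q ∣ b ^ e - 1 := (Nat.dvd_pow_sub_one_iff_orderOf_dvd (by omega)).mpr dvd_rfl
  have hbe : 1 < b ^ e := Nat.one_lt_pow he.ne' (by omega)
  have hqb : ¬ q ∣ b ^ e := fun h ↦ by
    have := Nat.dvd_sub h hqe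
    rw [Nat.sub_sub_self hbe.le] at this
    exact (Fact.out : q.Prime).one_lt.ne' (Nat.dvd_one.mp this)
  rw [Nat.mul_div_cancel_left s he, pow_mul]
  simpa using padicValNat.pow_sub_pow hq hbe (by simpa using hqe) hqb (right_ne_zero_of_mul hk)

lemma pow_sub_one_mul_pow_padicValNat_lt {b q e u r : ℕ} [Fact q.Prime] (hq : Odd q) (hb : 2 ≤ b)
    (he : 2 ≤ e) (hu : 2 ≤ u) (hr : 3 * r ≤ e * u) :
    (b ^ e - 1) * q ^ padicValNat q u < b ^ (e * u - r) := by
  have hbe : 0 < b ^ e := by positivity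
  rcases Nat.eq_zero_or_pos (padicValNat q u) with hv | hv
  · have : e + r ≤ e * u := by nlinarith
    have := Nat.pow_le_pow_right (by omega : 0 < b) (show e ≤ e * u - r by omega)
    rw [hv, pow_zero, mul_one]
    omega
  · -- `q ∣ u` with `q ≥ 3`, so `u ≥ 3`, which leaves room for the factor `u ≤ b^(u-1)`
    have hq3 : 3 ≤ q := by
      obtain ⟨k, rfl⟩ := hq
      have := (Fact.out : (2 * k + 1).Prime).two_le
      omega
    have hsu : q ^ padicValNat q u ≤ u := Nat.le_of_dvd (by omega) pow_padicValNat_dvd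
    have hqs : q ≤ q ^ padicValNat q u := Nat.le_self_pow hv.ne' q
    have hexp : e + (u - 1) ≤ e * u - r := by
      have : e + u + r ≤ e * u + 1 := by nlinarith
      omega
    have hub : u ≤ b ^ (u - 1) := by
      have := (Nat.lt_two_pow_self (n := u - 1)).trans_le (Nat.pow_le_pow_left hb _)
      omega
    calc (b ^ e - 1) * q ^ padicValNat q u ≤ (b ^ e - 1) * u := Nat.mul_le_mul_left _ hsu
      _ < b ^ e * u := Nat.mul_lt_mul_of_pos_right (Nat.sub_lt hbe one_pos) (by omega)
      _ ≤ b ^ e * b ^ (u - 1) := Nat.mul_le_mul_left _ hub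
      _ = b ^ (e + (u - 1)) := (pow_add b e (u - 1)).symm
      _ ≤ b ^ (e * u - r) := Nat.pow_le_pow_right (by omega) hexp

section PrimePowerQuotient

variable {b q a m r : ℕ} [Fact q.Prime]

lemma not_orderOf_dvd_of_mul_prime_pow_eq (hq : Odd q) (hb : 2 ≤ b) (hm : 2 ≤ m) (hr : 2 ≤ r)
    (hN : (b ^ r - 1) * q ^ a = b ^ (m * r) - 1) : ¬ orderOf (b : ZMod q) ∣ r := by
  intro her
  have hmr : m + r ≤ m * r := by nlinarith
  have hr0 : r / orderOf (b : ZMod q) ≠ 0 :=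
    (Nat.div_pos (Nat.le_of_dvd (by omega) her) (Nat.pos_of_dvd_of_pos her (by omega))).ne'
  -- the common factor `v_q(b^e - 1) + v_q(r/e)` cancels, leaving `a = v_q(m)`
  have hval := congrArg (padicValNat q) hN
  rw [padicValNat.mul (Nat.sub_ne_zero_of_lt (Nat.one_lt_pow (by omega) hb))
      (pow_ne_zero a hq.pos.ne'),
    padicValNat.prime_pow, padicValNat_pow_sub_one_of_orderOf_dvd hq hb (by omega) her,
    padicValNat_pow_sub_one_of_orderOf_dvd hq hb (by positivity) (her.mul_left m),
    Nat.mul_div_assoc m her, padicValNat.mul (by omega) hr0] at hval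
  have hle : q ^ a ≤ m := Nat.le_of_dvd (by omega) <| by
    rw [show a = padicValNat q m by omega]; exact pow_padicValNat_dvd
  have hlow := Nat.pow_sub_le_of_mul_eq_pow_sub_one hb (by omega) (by omega) hN
  have := Nat.pow_le_pow_right (by omega : 0 < b) (show m ≤ m * r - r by omega)
  have := Nat.lt_pow_self (n := m) (by omega : 1 < b)
  omega

lemma orderOf_eq_of_mul_prime_pow_eq (hq : Odd q) (hb : 2 ≤ b) (hm : 3 ≤ m) (hr : 2 ≤ r)
    (ha : a ≠ 0) (hN : (b ^ r - 1) * q ^ a = b ^ (m * r) - 1) :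
    orderOf (b : ZMod q) = m * r := by
  have her := not_orderOf_dvd_of_mul_prime_pow_eq hq hb (by omega) hr hN
  set e := orderOf (b : ZMod q)
  obtain ⟨u, hu⟩ : e ∣ m * r := (Nat.dvd_pow_sub_one_iff_orderOf_dvd (by omega)).mp
    (hN ▸ dvd_mul_of_dvd_right (dvd_pow_self q ha) _)
  have hmr : 3 * r ≤ e * u := hu ▸ Nat.mul_le_mul_right r hm
  have he : 2 ≤ e := by
    have : e ≠ 0 := by rintro h; rw [h, zero_mul] at hu; nlinarith
    have : e ≠ 1 := fun h ↦ her (h ▸ one_dvd r)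
    omega
  by_contra hne
  have hu2 : 2 ≤ u := by
    have : u ≠ 0 := by rintro rfl; rw [mul_zero] at hu; nlinarith
    have : u ≠ 1 := by rintro rfl; exact hne (by rw [hu, mul_one])
    omega
  -- `b^r - 1` is prime to `q`, so `a = v_q(b^(eu) - 1) = v_q(b^e - 1) + v_q(u)`
  have hval := congrArg (padicValNat q) hN
  rw [padicValNat.mul (Nat.sub_ne_zero_of_lt (Nat.one_lt_pow (by omega) hb))
      (pow_ne_zero a hq.pos.ne'),
    padicValNat.eq_zero_of_not_dvd (mt (Nat.dvd_pow_sub_one_iff_orderOf_dvd (by omega)).mp her),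
    padicValNat.prime_pow, zero_add,
    padicValNat_pow_sub_one_of_orderOf_dvd hq hb (by omega) ⟨u, hu⟩, hu,
    Nat.mul_div_cancel_left u (by omega)] at hval
  have hup : q ^ a ≤ (b ^ e - 1) * q ^ padicValNat q u := by
    rw [hval, pow_add]
    exact Nat.mul_le_mul_right _
      (Nat.le_of_dvd (Nat.sub_pos_of_lt (Nat.one_lt_pow (by omega) hb)) pow_padicValNat_dvd)
  have hlow : b ^ (e * u - r) ≤ q ^ a :=
    hu ▸ Nat.pow_sub_le_of_mul_eq_pow_sub_one hb (by omega) (by nlinarith) hN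
  have := pow_sub_one_mul_pow_padicValNat_lt hq hb he hu2 hmr
  omega

lemma dvd_of_orderOf_eq_of_mul_prime_pow_eq {n d : ℕ} (hb : 2 ≤ b)
    (hN : (b ^ r - 1) * q ^ a = b ^ n - 1) (he : orderOf (b : ZMod q) = n) (hdn : d ∣ n)
    (hne : d ≠ n) : d ∣ r := by
  have hqd : ¬ q ∣ b ^ d - 1 := by
    rw [Nat.dvd_pow_sub_one_iff_orderOf_dvd (by omega), he]
    exact fun h ↦ hne (Nat.dvd_antisymm hdn h)
  have hcop : Nat.Coprime (b ^ d - 1) (q ^ a) :=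
    ((Nat.Prime.coprime_iff_not_dvd Fact.out).mpr hqd).symm.pow_right a
  exact Nat.dvd_of_pow_sub_one_dvd_pow_sub_one hb
    (hcop.dvd_of_dvd_mul_right (hN ▸ Nat.pow_sub_one_dvd_pow_sub_one b hdn))

end PrimePowerQuotient

lemma eq_of_prime_dvd_of_forall_proper_dvd {m r : ℕ} (h : ∀ d, d ∣ m * r → d ≠ m * r → d ∣ r)
    (hm : 2 ≤ m) (hr : r ≠ 0) {ℓ : ℕ} (hℓ : ℓ.Prime) (hℓn : ℓ ∣ m * r) : m = ℓ := by
  obtain ⟨k, hk⟩ := hℓn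
  have hmr : 0 < m * r := by positivity
  have hk0 : 0 < k := Nat.pos_of_ne_zero (by rintro rfl; omega)
  obtain ⟨j, rfl⟩ := h k (Dvd.intro_left ℓ hk.symm) (fun hkn ↦ by nlinarith [hℓ.two_le])
  have hmj : m * j = ℓ := Nat.eq_of_mul_eq_mul_right hk0 (by rw [← hk]; ring)
  exact (hℓ.eq_one_or_self_of_dvd m (Dvd.intro j hmj)).resolve_left (by omega)

lemma exists_prime_pow_of_forall_proper_dvd {m r : ℕ} (h : ∀ d, d ∣ m * r → d ≠ m * r → d ∣ r)
    (hm : 2 ≤ m) (hr : 2 ≤ r) : ∃ p t : ℕ, p.Prime ∧ 1 ≤ t ∧ m = p ∧ r = p ^ t := by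
  have hprime : ∀ {ℓ : ℕ}, ℓ.Prime → ℓ ∣ m * r → m = ℓ :=
    eq_of_prime_dvd_of_forall_proper_dvd h hm (by omega)
  have hm' : m.Prime := hprime (Nat.minFac_prime (by omega))
    (dvd_mul_of_dvd_left (Nat.minFac_dvd m) r) ▸ Nat.minFac_prime (by omega)
  have hr' : r = m ^ r.primeFactorsList.length := Nat.eq_prime_pow_of_unique_prime_dvd (by omega)
    fun hℓ hℓr ↦ (hprime hℓ (dvd_mul_of_dvd_right hℓr m)).symm
  refine ⟨m, _, hm', Nat.one_le_iff_ne_zero.mpr fun ht ↦ ?_, rfl, hr'⟩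
  rw [ht, pow_zero] at hr'
  omega

theorem prime_power_quotient_forces_shape_general (r m : ℕ) (hr : 2 ≤ r) (hm : 3 ≤ m)
    (hpp : IsPrimePow ((2 ^ (m * r) - 1) / (2 ^ r - 1))) :
    ∃ p t : ℕ, p.Prime ∧ 1 ≤ t ∧ m = p ∧ r = p ^ t := by
  obtain ⟨q, a, hq, ha, hqa⟩ := hpp
  have : Fact q.Prime := ⟨hq.nat_prime⟩
  have hN : (2 ^ r - 1) * q ^ a = 2 ^ (m * r) - 1 := by
    rw [hqa]
    exact Nat.mul_div_cancel' (Nat.pow_sub_one_dvd_pow_sub_one 2 (dvd_mul_left r m))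
  have hodd : Odd q :=
    (Nat.Even.sub_odd Nat.one_le_two_pow (Nat.even_pow.mpr ⟨even_two, by positivity⟩)
      odd_one).of_dvd_nat (hN ▸ dvd_mul_of_dvd_right (dvd_pow_self q ha.ne') _)
  have he := orderOf_eq_of_mul_prime_pow_eq hodd le_rfl hm hr ha.ne' hN
  exact exists_prime_pow_of_forall_proper_dvd
    (fun d hd hne ↦ dvd_of_orderOf_eq_of_mul_prime_pow_eq le_rfl hN he hd hne) (by omega) hr

/-- Let `r ≥ 2` and `m ≥ 3` be integers with `m·r ≠ 6`.  If `(2^{m·r} - 1)/(2^r - 1)` is a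
prime power, then `m` is a prime `p` and `r = p^t` for some integer `t ≥ 1`. -/
theorem prime_power_quotient_forces_shape (r m : ℕ) (hr : 2 ≤ r) (hm : 3 ≤ m)
    (h6 : m * r ≠ 6) (hpp : IsPrimePow ((2 ^ (m * r) - 1) / (2 ^ r - 1))) :
    ∃ p t : ℕ, p.Prime ∧ 1 ≤ t ∧ m = p ∧ r = p ^ t :=
  prime_power_quotient_forces_shape_general r m hr hm hpp
end
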